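/- arXiv:2311.06732 — 4 statements merged into one kernel-verified Lean document; each statement's English description precedes it below -/
import Mathlib

section
/- Let $p$ and $m$ be positive integers and let $\gamma_1,\dots,\gamma_m \in \Phi_p$ be such that $\sum_{i=1}^m \gamma_i \in [0,1]$. Then $\sum_{i=1}^m \gamma_i \in \Phi_p$. -/
/-- The hyperstandard set `Φ_p = {1 - k/(p·m) | m ∈ ℕ⁺, 0 ≤ k ≤ p} ∩ [0,1]`. -/
def Phi (p : ℕ) : Set ℝ :=
  {x | (∃ m k : ℕ, 0 < m ∧ k ≤ p ∧ x = 1 - (k : ℝ) / (p * m)) ∧ 0 ≤ x ∧ x ≤ 1}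

/-!
An element `1 - k/(pn)` of `Φ_p` is at least `1 - 1/n ≥ 1/2` when `n ≥ 2`, so two such elements
already sum to at least `1`. Hence if `x + y < 1`, one summand has the form `1 - k/p`, and then
`x + y = 1 - (kn' + k' - pn')/(pn')` where `y = 1 - k'/(pn')`; the new numerator is at most `p`
because `k ≤ p`, and nonnegative because `x + y ≤ 1`. Induction on the number of summands
finishes the proof.
-/

lemma one_mem_Phi (p : ℕ) : (1 : ℝ) ∈ Phi p :=
  ⟨⟨1, 0, one_pos, Nat.zero_le p, by simp⟩, zero_le_one, le_rfl⟩

lemma zero_mem_Phi {p : ℕ} (hp : 0 < p) : (0 : ℝ) ∈ Phi p := by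
  have hp' : (p : ℝ) ≠ 0 := by positivity
  exact ⟨⟨1, p, one_pos, le_rfl, by simp [hp']⟩, le_rfl, zero_le_one⟩

lemma half_le_one_sub_div_mul {p k n : ℕ} (hk : k ≤ p) (hn : 2 ≤ n) :
    (1 / 2 : ℝ) ≤ 1 - k / (p * n) := by
  have hn' : (2 : ℝ) ≤ n := by exact_mod_cast hn
  have hkp : (k : ℝ) / p ≤ 1 := div_le_one_of_le₀ (by exact_mod_cast hk) p.cast_nonneg
  have : (k : ℝ) / (p * n) ≤ 1 / 2 :=
    calc (k : ℝ) / (p * n) = k / p / n := (div_div _ _ _).symm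
      _ ≤ 1 / n := by gcongr
      _ ≤ 1 / 2 := by gcongr
  linarith

lemma add_mem_Phi_of_eq_one_sub_div {p k : ℕ} (hp : 0 < p) (hk : k ≤ p) {x y : ℝ}
    (hx : x = 1 - k / p) (hy : y ∈ Phi p) (hxy : x + y ≤ 1) : x + y ∈ Phi p := by
  obtain ⟨⟨n, k', hn, hk', rfl⟩, hy0, -⟩ := hy
  have hx0 : 0 ≤ x := by
    rw [hx, sub_nonneg]
    exact div_le_one_of_le₀ (by exact_mod_cast hk) p.cast_nonneg
  refine ⟨?_, by linarith, hxy⟩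
  have hpr : (0 : ℝ) < p := by exact_mod_cast hp
  have hnr : (0 : ℝ) < n := by exact_mod_cast hn
  have hsum : x + (1 - k' / (p * n)) = 1 - ((k * n + k' : ℕ) - (p * n : ℕ) : ℝ) / (p * n) := by
    rw [hx]; push_cast; field_simp; ring
  have hle : p * n ≤ k * n + k' := by
    have : (p : ℝ) * n ≤ k * n + k' := by
      rw [hsum, sub_le_self_iff] at hxy
      have := (le_div_iff₀ (by positivity)).1 hxy
      push_cast at this
      linarith
    exact_mod_cast this
  obtain ⟨j, hj⟩ := Nat.exists_eq_add_of_le hle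
  refine ⟨n, j, hn, ?_, ?_⟩
  · have : k * n ≤ p * n := Nat.mul_le_mul_right n hk
    omega
  · rw [hsum, hj]; push_cast; ring_nf

lemma add_mem_Phi {p : ℕ} (hp : 0 < p) {x y : ℝ} (hx : x ∈ Phi p) (hy : y ∈ Phi p)
    (hxy : x + y ≤ 1) : x + y ∈ Phi p := by
  obtain ⟨n, k, hn, hk, hxe⟩ := hx.1
  obtain ⟨n', k', hn', hk', hye⟩ := hy.1
  by_cases h1 : n = 1
  · subst h1
    exact add_mem_Phi_of_eq_one_sub_div hp hk (by simpa using hxe) hy hxy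
  by_cases h1' : n' = 1
  · subst h1'
    rw [add_comm] at hxy ⊢
    exact add_mem_Phi_of_eq_one_sub_div hp hk' (by simpa using hye) hx hxy
  have hx2 : 1 / 2 ≤ x := hxe ▸ half_le_one_sub_div_mul hk (by omega)
  have hy2 : 1 / 2 ≤ y := hye ▸ half_le_one_sub_div_mul hk' (by omega)
  rw [show x + y = 1 by linarith]
  exact one_mem_Phi p

lemma Finset.sum_mem_Phi {ι : Type*} {p : ℕ} (hp : 0 < p) (s : Finset ι) {γ : ι → ℝ}
    (hγ : ∀ i ∈ s, γ i ∈ Phi p) (hs : ∑ i ∈ s, γ i ≤ 1) : ∑ i ∈ s, γ i ∈ Phi p := by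
  classical
  induction s using Finset.induction_on with
  | empty => simpa using zero_mem_Phi hp
  | insert a s ha ih =>
    rw [Finset.sum_insert ha] at hs ⊢
    have hγ' : ∀ i ∈ s, γ i ∈ Phi p := fun i hi => hγ i (Finset.mem_insert_of_mem hi)
    have ha0 : 0 ≤ γ a := (hγ a (Finset.mem_insert_self a s)).2.1
    exact add_mem_Phi hp (hγ a (Finset.mem_insert_self a s)) (ih hγ' (by linarith)) hs

theorem sum_mem_Phi (p m : ℕ) (hp : 0 < p) (γ : Fin m → ℝ)
    (hγ : ∀ i, γ i ∈ Phi p) (h1 : ∑ i, γ i ≤ 1) :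
    (∑ i, γ i) ∈ Phi p :=
  Finset.univ.sum_mem_Phi hp (fun i _ => hγ i) h1
end

section
/- Let $p$ be a positive integer. Suppose $t \in (0,1)$ is a real number such that $\gamma + t d = 1$ for some $\gamma \in \Phi_p$ and $d \in \mathbb{N}^+$. Then $t \le 1 - \min\{\frac{1}{p}, \frac{1}{2}\}$; equivalently, for every $\gamma \in \Phi_p$ and $d \in \mathbb{N}^+$ with $0 < \frac{1-\gamma}{d} < 1$, one has $\frac{1-\gamma}{d} \le \max\{\frac{p-1}{p}, \frac{1}{2}\}$. -/
theorem lct_one_gap_dim_one (p : ℕ) (hp : 0 < p) (γ : ℝ) (hγ : γ ∈ Phi p)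
    (d : ℕ) (hd : 0 < d) (h0 : 0 < (1 - γ) / d) (h1 : (1 - γ) / d < 1) :
    (1 - γ) / d ≤ max (((p : ℝ) - 1) / p) (1/2 : ℝ) := by
  obtain ⟨⟨m, k, hm, hk, hx⟩, h0γ, h1γ⟩ := hγ
  have hp' : (0:ℝ) < p := by exact_mod_cast hp
  have hm' : (0:ℝ) < m := by exact_mod_cast hm
  have hd' : (0:ℝ) < d := by exact_mod_cast hd
  have hk' : (k:ℝ) ≤ p := by exact_mod_cast hk
  have ht : (1 - γ)/d = k / (p*m*d) := by
    rw [hx]; field_simp; ring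
  rw [ht] at h1 ⊢
  have hpmd : (0:ℝ) < p*m*d := by positivity
  rcases le_or_gt 2 d with h2 | h2
  · refine le_trans ?_ (le_max_right _ _)
    rw [div_le_div_iff₀ hpmd two_pos]
    have h2' : (2:ℝ) ≤ d := by exact_mod_cast h2
    have hm1 : (1:ℝ) ≤ m := by exact_mod_cast hm
    have hkpm : (k:ℝ) ≤ p*m := by nlinarith
    nlinarith
  · have hd1 : d = 1 := by omega
    subst hd1
    rcases le_or_gt 2 m with h2m | h2m
    · refine le_trans ?_ (le_max_right _ _)
      rw [div_le_div_iff₀ hpmd two_pos]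
      have h2' : (2:ℝ) ≤ m := by exact_mod_cast h2m
      push_cast
      nlinarith
    · have hm1 : m = 1 := by omega
      subst hm1
      refine le_trans ?_ (le_max_left _ _)
      norm_num at h1 ⊢
      have hkp : (k:ℝ) < p := by rwa [div_lt_one hp'] at h1
      have hkn : k < p := by exact_mod_cast hkp
      have hkp' : (k:ℝ) ≤ (p:ℝ) - 1 := by
        have : (k:ℝ)+1 ≤ p := by exact_mod_cast hkn
        linarith
      gcongr
end

section
/- Let $p$ be a positive integer. Suppose $t \in (0,1)$ and there exist $n \in \mathbb{N}$, $\gamma_1,\dots,\gamma_n \in \Phi_p$, and a positive integer $D$ such that $2 = \sum_{i=1}^n \gamma_i + tD$. Then $t \le 1 - \min\{\frac{1}{6}, \frac{1}{p(p+1)}\}$. -/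
open Finset AddSubgroup

theorem add_le_of_lt_of_mem_zmultiples {R : Type*} [Ring R] [LinearOrder R] [IsStrictOrderedRing R]
    {δ x y : R} (hδ : 0 < δ) (hx : x ∈ zmultiples δ) (hy : y ∈ zmultiples δ) (hxy : x < y) :
    x + δ ≤ y := by
  obtain ⟨a, rfl⟩ := hx
  obtain ⟨b, rfl⟩ := hy
  simp only [zsmul_eq_mul] at hxy ⊢
  have hab : a < b := by exact_mod_cast lt_of_mul_lt_mul_right hxy hδ.le
  have hab' : (a : R) + 1 ≤ b := by exact_mod_cast hab
  calc a * δ + δ = (a + 1) * δ := (add_one_mul _ _).symm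
    _ ≤ b * δ := mul_le_mul_of_nonneg_right hab' hδ.le

section Lattice

variable {K : Type*} [Field K] [LinearOrder K] [IsStrictOrderedRing K]

theorem one_mem_zmultiples_natCast_inv {d : ℕ} (hd : d ≠ 0) : (1 : K) ∈ zmultiples (d : K)⁻¹ :=
  ⟨d, by simp [hd]⟩

theorem zmultiples_natCast_inv_le {d e : ℕ} (hde : d ∣ e) (he : e ≠ 0) :
    zmultiples (d : K)⁻¹ ≤ zmultiples (e : K)⁻¹ := by
  obtain ⟨c, rfl⟩ := hde
  refine zmultiples_le.2 ⟨c, ?_⟩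
  have hc : (c : K) ≠ 0 := by exact_mod_cast right_ne_zero_of_mul he
  simp [field]

theorem one_add_inv_le_sum_of_forall_mem {ι : Type*} [Fintype ι] {γ : ι → K} {d : ℕ}
    (hd : d ≠ 0) (hγ : ∀ i, γ i ∈ zmultiples (d : K)⁻¹) (h1 : 1 < ∑ i, γ i) :
    1 + (d : K)⁻¹ ≤ ∑ i, γ i :=
  add_le_of_lt_of_mem_zmultiples (by positivity) (one_mem_zmultiples_natCast_inv hd)
    (sum_mem fun i _ => hγ i) h1

theorem one_sub_div_mem_zmultiples {N : ℕ} (hN : N ≠ 0) (k : ℕ) :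
    1 - (k : K) / N ∈ zmultiples (N : K)⁻¹ :=
  sub_mem (one_mem_zmultiples_natCast_inv hN) ⟨k, by simp [div_eq_mul_inv]⟩

end Lattice

namespace Phi

variable {p : ℕ} {γ : ℝ}

theorem nonneg (hγ : γ ∈ Phi p) : 0 ≤ γ := hγ.2.1

theorem le_one (hγ : γ ∈ Phi p) : γ ≤ 1 := hγ.2.2

theorem exists_of_notMem_zmultiples (hp : 0 < p) (hγ : γ ∈ Phi p)
    (h : γ ∉ zmultiples (p : ℝ)⁻¹) :
    ∃ m : ℕ, 2 ≤ m ∧ γ ∈ zmultiples ((p * m : ℕ) : ℝ)⁻¹ ∧ 1 - (m : ℝ)⁻¹ ≤ γ := by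
  obtain ⟨⟨m, k, hm, hk, rfl⟩, -, -⟩ := hγ
  have hmem := one_sub_div_mem_zmultiples (K := ℝ) (N := p * m) (by positivity) k
  push_cast at hmem
  obtain rfl | hm2 : m = 1 ∨ 2 ≤ m := by omega
  · exact absurd (by simpa using hmem) h
  refine ⟨m, hm2, by exact_mod_cast hmem, ?_⟩
  have hkm : (k : ℝ) / (p * m) ≤ (m : ℝ)⁻¹ := by
    rw [div_le_iff₀ (by positivity)]
    have hk' : (k : ℝ) ≤ p := by exact_mod_cast hk
    have hm' : (m : ℝ) ≠ 0 := by positivity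
    field_simp
    exact hk'
  linarith

theorem min_le_of_pos (hp : 0 < p) (hγ : γ ∈ Phi p) (h0 : 0 < γ) :
    min (p : ℝ)⁻¹ (1 / 2) ≤ γ := by
  by_cases h : γ ∈ zmultiples (p : ℝ)⁻¹
  · refine min_le_of_left_le ?_
    simpa using add_le_of_lt_of_mem_zmultiples (by positivity) (zero_mem _) h h0
  · obtain ⟨m, hm2, -, hge⟩ := exists_of_notMem_zmultiples hp hγ h
    have : (m : ℝ)⁻¹ ≤ 1 / 2 := by
      rw [one_div]; exact inv_anti₀ two_pos (by exact_mod_cast hm2)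
    exact min_le_of_right_le (by linarith)

end Phi

noncomputable def glctGap (p : ℕ) : ℝ := min (1 / 6) (1 / ((p : ℝ) * (p + 1)))

section Gap

variable {p : ℕ}

theorem glctGap_le_one_sixth : glctGap p ≤ 1 / 6 := min_le_left _ _

theorem glctGap_le_one_div : glctGap p ≤ 1 / ((p : ℝ) * (p + 1)) := min_le_right _ _

theorem glctGap_le_inv {d : ℕ} (hd : 0 < d) (hdp : d ≤ p * (p + 1)) : glctGap p ≤ (d : ℝ)⁻¹ := by
  refine glctGap_le_one_div.trans ?_
  rw [one_div]
  exact inv_anti₀ (by positivity) (by exact_mod_cast hdp)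

theorem two_mul_glctGap_le (hp : 0 < p) : 2 * glctGap p ≤ min (p : ℝ)⁻¹ (1 / 2) := by
  have hp' : (1 : ℝ) ≤ p := by exact_mod_cast hp
  refine le_min ?_ (by linarith [glctGap_le_one_sixth (p := p)])
  calc 2 * glctGap p ≤ 2 * (1 / ((p : ℝ) * (p + 1))) := by gcongr; exact glctGap_le_one_div
    _ ≤ (p : ℝ)⁻¹ := by
      rw [mul_one_div, ← one_div, div_le_div_iff₀ (by positivity) (by positivity)]
      nlinarith

variable {ι : Type*} [Fintype ι] {γ : ι → ℝ}

theorem one_add_glctGap_le_sum_of_forall_mem {d : ℕ} (hd : 0 < d) (hdp : d ≤ p * (p + 1))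
    (hγ : ∀ i, γ i ∈ zmultiples (d : ℝ)⁻¹) (h1 : 1 < ∑ i, γ i) : 1 + glctGap p ≤ ∑ i, γ i := by
  linarith [glctGap_le_inv hd hdp, one_add_inv_le_sum_of_forall_mem hd.ne' hγ h1]

theorem one_add_glctGap_le_sum_of_pair (hγ : ∀ i, 0 ≤ γ i) {i j : ι} (hij : i ≠ j)
    (hi : 2 / 3 ≤ γ i) (hj : 1 / 2 ≤ γ j) : 1 + glctGap p ≤ ∑ i, γ i := by
  linarith [glctGap_le_one_sixth (p := p),
    add_le_sum (fun k _ => hγ k) (mem_univ i) (mem_univ j) hij]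

theorem one_add_glctGap_le_sum_of_single (hp : 0 < p) (b : ι)
    (hrest : ∀ i ≠ b, γ i ∈ zmultiples (p : ℝ)⁻¹) (hb : 1 - ((p : ℝ) + 1)⁻¹ ≤ γ b) (hb1 : γ b ≤ 1)
    (h1 : 1 < ∑ i, γ i) : 1 + glctGap p ≤ ∑ i, γ i := by
  classical
  have hsplit := add_sum_erase univ γ (mem_univ b)
  have hrest_ge : (p : ℝ)⁻¹ ≤ ∑ i ∈ univ.erase b, γ i := by
    have := add_le_of_lt_of_mem_zmultiples (by positivity) (zero_mem _)
      (sum_mem fun i hi => hrest i (ne_of_mem_erase hi)) (by linarith)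
    rwa [zero_add] at this
  have hid : (p : ℝ)⁻¹ - ((p : ℝ) + 1)⁻¹ = 1 / ((p : ℝ) * (p + 1)) := by
    field_simp
    ring
  linarith [glctGap_le_one_div (p := p)]

theorem one_add_glctGap_le_sum (hp : 0 < p) (hγ : ∀ i, γ i ∈ Phi p) (h1 : 1 < ∑ i, γ i) :
    1 + glctGap p ≤ ∑ i, γ i := by
  classical
  set E := univ.filter fun i => γ i ∉ zmultiples (p : ℝ)⁻¹
  have hE : ∀ i ∉ E, γ i ∈ zmultiples (p : ℝ)⁻¹ := fun i hi => by simpa [E] using hi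
  choose! m hm2 hmem hge using fun i (hi : i ∈ E) =>
    Phi.exists_of_notMem_zmultiples hp (hγ i) (mem_filter.1 hi).2
  have one_sub_inv_le {i : ι} (hi : i ∈ E) {c : ℕ} (hc : c ≤ m i) (hc0 : 0 < c) :
      1 - (c : ℝ)⁻¹ ≤ γ i := by
    have : (m i : ℝ)⁻¹ ≤ (c : ℝ)⁻¹ := inv_anti₀ (by positivity) (by exact_mod_cast hc)
    linarith [hge i hi]
  by_cases hm_two : ∀ i ∈ E, m i = 2
  · refine one_add_glctGap_le_sum_of_forall_mem (d := p * 2) (by positivity) (by nlinarith)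
      (fun i => ?_) h1
    by_cases hi : i ∈ E
    · simpa [hm_two i hi] using hmem i hi
    · exact zmultiples_natCast_inv_le (dvd_mul_right p 2) (by positivity) (hE i hi)
  push Not at hm_two
  obtain ⟨b, hbE, hb⟩ := hm_two
  have hmb := hm2 b hbE
  by_cases hpair : ∃ j ∈ E, j ≠ b
  · obtain ⟨j, hjE, hjb⟩ := hpair
    have hb3 := one_sub_inv_le hbE (c := 3) (by omega) (by norm_num)
    have hj2 := one_sub_inv_le hjE (c := 2) (hm2 j hjE) (by norm_num)
    norm_num at hb3 hj2
    exact one_add_glctGap_le_sum_of_pair (fun i => Phi.nonneg (hγ i)) hjb.symm hb3 hj2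
  push Not at hpair
  have hrest : ∀ i ≠ b, γ i ∈ zmultiples (p : ℝ)⁻¹ := fun i hib => hE i fun hi => hib (hpair i hi)
  rcases le_or_gt (m b) p with hbp | hbp
  · refine one_add_glctGap_le_sum_of_forall_mem (d := p * m b) (by positivity)
      (by nlinarith) (fun i => ?_) h1
    rcases eq_or_ne i b with rfl | hib
    · exact hmem i hbE
    · exact zmultiples_natCast_inv_le (dvd_mul_right _ _) (by positivity)
        (hrest i hib)
  · have := one_sub_inv_le hbE (c := p + 1) hbp (by omega)
    push_cast at this
    exact one_add_glctGap_le_sum_of_single hp b hrest this (Phi.le_one (hγ b)) h1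

theorem two_mul_glctGap_le_sum (hp : 0 < p) (hγ : ∀ i, γ i ∈ Phi p) (hpos : 0 < ∑ i, γ i) :
    2 * glctGap p ≤ ∑ i, γ i := by
  obtain ⟨j, -, hj⟩ := exists_lt_of_sum_lt (by simpa using hpos : ∑ _i : ι, (0 : ℝ) < ∑ i, γ i)
  calc 2 * glctGap p ≤ min (p : ℝ)⁻¹ (1 / 2) := two_mul_glctGap_le hp
    _ ≤ γ j := Phi.min_le_of_pos hp (hγ j) hj
    _ ≤ ∑ i, γ i := single_le_sum (fun i _ => Phi.nonneg (hγ i)) (mem_univ j)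

end Gap

theorem glct_one_gap_dim_one_general (p : ℕ) (hp : 0 < p) (t : ℝ) (ht1 : t < 1)
    (n : ℕ) (γ : Fin n → ℝ) (hγ : ∀ i, γ i ∈ Phi p) (D : ℕ) (hD : 0 < D)
    (h : (2 : ℝ) = ∑ i, γ i + t * D) :
    t ≤ 1 - min (1/6 : ℝ) (1 / ((p : ℝ) * (p + 1))) := by
  change t ≤ 1 - glctGap p
  obtain rfl | rfl | hD3 : D = 1 ∨ D = 2 ∨ 3 ≤ D := by omega
  · push_cast at h
    linarith [one_add_glctGap_le_sum hp hγ (by linarith)]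
  · push_cast at h
    linarith [two_mul_glctGap_le_sum hp hγ (by linarith)]
  · have hsum : 0 ≤ ∑ i, γ i := sum_nonneg fun i _ => Phi.nonneg (hγ i)
    have hD' : (3 : ℝ) ≤ D := by exact_mod_cast hD3
    have ht : t ≤ 2 / 3 := by
      rw [le_div_iff₀ (by norm_num)]
      nlinarith
    linarith [glctGap_le_one_sixth (p := p)]

theorem glct_one_gap_dim_one (p : ℕ) (hp : 0 < p) (t : ℝ) (ht0 : 0 < t) (ht1 : t < 1)
    (n : ℕ) (γ : Fin n → ℝ) (hγ : ∀ i, γ i ∈ Phi p) (D : ℕ) (hD : 0 < D)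
    (h : (2 : ℝ) = ∑ i, γ i + t * D) :
    t ≤ 1 - min (1/6 : ℝ) (1 / ((p : ℝ) * (p + 1))) :=
  glct_one_gap_dim_one_general p hp t ht1 n γ hγ D hD h
end

section
/- Let $p \ge 2$ and $q$ be positive integers. With $\epsilon_1(p,q)$ as above (which satisfies $\epsilon_1(p,q) < 1$ and $\epsilon_1(p,q) \ge \frac{1}{S_{(pq+1)p+1}-1}$), the quantity $\epsilon_2(p,q) = \frac{\epsilon_1(p,q)}{q + \epsilon_1(p,q)}$ satisfies $\epsilon_2(p,q) > \frac{1}{S_{(pq+1)p+2}}$. -/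
/-- The set of finite sums of elements of `Φ_p` exceeding `q`. -/
def sumsGT (p q : ℕ) : Set ℝ :=
  {x | (q : ℝ) < x ∧ ∃ (n : ℕ) (f : Fin n → ℝ), (∀ i, f i ∈ Phi p) ∧ x = ∑ i, f i}

/-- `ε₁(p,q) = min{γ > q | γ a finite sum of elements of Φ_p} - q`. -/
noncomputable def eps1 (p q : ℕ) : ℝ := sInf (sumsGT p q) - q

/-- `ε₂(p,q) = ε₁(p,q)/(q + ε₁(p,q))`. -/
noncomputable def eps2 (p q : ℕ) : ℝ := eps1 p q / (q + eps1 p q)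

/-- `sylvester n` is the `(n+1)`-st Sylvester number `S_{n+1}`: `S_1 = 2`,
`S_{n} = S_{n-1}^2 - S_{n-1} + 1`. -/
def sylvester : ℕ → ℕ
  | 0 => 2
  | n + 1 => sylvester n ^ 2 - sylvester n + 1

lemma sylvester_ge (n : ℕ) : n + 2 ≤ sylvester n := by
  induction n with
  | zero => simp [sylvester]
  | succ k ih =>
    have h2 : 2 ≤ sylvester k := le_trans (by omega) ih
    have : sylvester k + 1 ≤ sylvester k ^ 2 - sylvester k + 1 := by
      nlinarith [Nat.sub_add_cancel (show sylvester k ≤ sylvester k ^ 2 by nlinarith)]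
    calc k + 1 + 2 ≤ sylvester k + 1 := by omega
    _ ≤ sylvester (k+1) := by rw [sylvester]; exact this

lemma sylvester_succ_cast (n : ℕ) :
    (sylvester (n+1) : ℝ) = (sylvester n : ℝ)^2 - sylvester n + 1 := by
  have h2 : 2 ≤ sylvester n := le_trans (by omega) (sylvester_ge n)
  have hle : sylvester n ≤ sylvester n ^ 2 := by nlinarith
  rw [sylvester]
  push_cast [Nat.sub_add_cancel hle, Nat.cast_sub hle]
  ring

/-- `ε₂(p,q) > 1/S_{(pq+1)p+2}`; here `S_{(pq+1)p+2} = sylvester ((p*q+1)*p + 1)`. -/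
theorem eps2_gt (p q : ℕ) (hp : 2 ≤ p) (hq : 0 < q)
    (h1 : eps1 p q < 1)
    (h2 : eps1 p q ≥ 1 / ((sylvester ((p * q + 1) * p) : ℝ) - 1)) :
    eps2 p q > 1 / (sylvester ((p * q + 1) * p + 1) : ℝ) := by
  set n := (p * q + 1) * p with hn
  set e := eps1 p q with he
  set a : ℝ := (sylvester n : ℝ) with ha
  have hqn : q + 2 ≤ sylvester n := by
    have hle1 : q ≤ p * q := Nat.le_mul_of_pos_left q (by omega)
    have hle2 : p * q + 1 ≤ (p * q + 1) * p := Nat.le_mul_of_pos_right _ (by omega)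
    have := sylvester_ge n
    omega
  have haq : (q : ℝ) + 2 ≤ a := by rw [ha]; exact_mod_cast hqn
  have hq0 : (0:ℝ) < q := by exact_mod_cast hq
  have ha1 : (1:ℝ) < a - 1 := by linarith
  have ha0 : (0:ℝ) < a - 1 := by linarith
  have hea : 1 ≤ e * (a - 1) := by
    rw [ge_iff_le, div_le_iff₀ ha0] at h2
    exact h2
  have he0 : (0:ℝ) < e := by nlinarith
  have hcast : (sylvester (n+1) : ℝ) = a^2 - a + 1 := sylvester_succ_cast n
  have hden : (0:ℝ) < a^2 - a + 1 := by nlinarith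
  rw [gt_iff_lt, eps2, ← he, hcast]
  rw [div_lt_div_iff₀ hden (by linarith : (0:ℝ) < q + e)]
  have key : (q:ℝ) < e * (a * (a-1)) := by
    have : a ≤ a * (e * (a-1)) := by nlinarith
    nlinarith
  nlinarith
end
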